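/- The bound $|a_5| \leq 1/4$ for the class $\mathcal{S}^*_{\sin}$ is sharp: the function $H(z) = z \exp\left( \int_0^z \frac{\sin(t^4)}{t}\, dt \right)$ is analytic on $\mathbb{D}$, belongs to $\mathcal{A}$, satisfies $z H'(z)/H(z) = 1 + \sin(z^4)$ for all $z \in \mathbb{D}$ (hence $H \in \mathcal{S}^*_{\sin}$, since $z \mapsto z^4$ is a Schwarz function), and its fifth Taylor coefficient at the origin equals $1/4$. -/

import Mathlib

/-!
Write `sin (z ^ 4) = z ^ 4 * q z` with `q = dslope sin 0 ∘ (· ^ 4)`, so `q 0 = 1`. Differentiating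
`z H' = (1 + z ^ 4 q) H` five times at `0` by Leibniz' rule, only the terms in which the monomial
is differentiated down to a constant survive: `5 H⁽⁵⁾(0) = H⁽⁵⁾(0) + 5! (q H)'(0) = H⁽⁵⁾(0) + 5!`,
using `H 0 = 0` and `H' 0 = 1`. Hence `H⁽⁵⁾(0) = 30`.
-/

open Complex Metric Filter Topology
open scoped Nat ContDiff

section IteratedDerivAtZero

variable {𝕜 : Type*} [NontriviallyNormedField 𝕜]

theorem iteratedDeriv_pow_mul_zero {q : 𝕜 → 𝕜} {n : ℕ} (hq : ContDiffAt 𝕜 n q 0) (m : ℕ) :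
    iteratedDeriv n (fun z => z ^ m * q z) 0 = n.descFactorial m * iteratedDeriv (n - m) q 0 := by
  rw [iteratedDeriv_fun_mul (f := (· ^ m)) (by fun_prop) hq]
  simp only [iteratedDeriv_fun_pow_zero, Nat.cast_ite, Nat.cast_zero, mul_ite, ite_mul, mul_zero,
    zero_mul, Finset.sum_ite_eq', Finset.mem_range]
  split_ifs with hmn
  · rw [Nat.descFactorial_eq_factorial_mul_choose]
    push_cast
    ring
  · rw [Nat.descFactorial_eq_zero_iff_lt.mpr (by omega)]
    simp

theorem iteratedDeriv_succ_zero_of_id_mul_deriv_eq {f q : 𝕜 → 𝕜} {m : ℕ}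
    (hf : ContDiffAt 𝕜 ∞ f 0) (hq : ContDiffAt 𝕜 ∞ q 0) (hf0 : f 0 = 0) (hf1 : deriv f 0 = 1)
    (hode : ∀ᶠ z in 𝓝 0, z * deriv f z = (1 + z ^ m * q z) * f z) :
    m * iteratedDeriv (m + 1) f 0 = (m + 1)! * q 0 := by
  have hle : ((m + 1 : ℕ) : WithTop ℕ∞) ≤ ∞ := mod_cast le_top
  have hf' : ContDiffAt 𝕜 ∞ (deriv f) 0 := hf.derivWithin (by simp)
  have hlhs : iteratedDeriv (m + 1) (fun z => z ^ 1 * deriv f z) 0 =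
      (m + 1) * iteratedDeriv (m + 1) f 0 := by
    rw [iteratedDeriv_pow_mul_zero (hf'.of_le hle), Nat.descFactorial_one, Nat.add_sub_cancel,
      ← iteratedDeriv_succ']
    push_cast
    rfl
  have hrhs : iteratedDeriv (m + 1) (fun z => f z + z ^ m * (q z * f z)) 0 =
      iteratedDeriv (m + 1) f 0 + (m + 1)! * q 0 := by
    have hdesc : (m + 1).descFactorial m = (m + 1)! := by
      simpa using Nat.factorial_mul_descFactorial (Nat.le_succ m)
    rw [iteratedDeriv_fun_add (hf.of_le hle)
        (((contDiffAt_fun_id.pow m).mul (hq.mul hf)).of_le hle),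
      iteratedDeriv_pow_mul_zero ((hq.mul hf).of_le hle), hdesc, Nat.add_sub_cancel_left,
      iteratedDeriv_one,
      deriv_fun_mul (hq.differentiableAt (by simp)) (hf.differentiableAt (by simp)), hf0, hf1]
    ring
  have key : (fun z => z ^ 1 * deriv f z) =ᶠ[𝓝 0] fun z => f z + z ^ m * (q z * f z) := by
    filter_upwards [hode] with z hz
    rw [pow_one, hz]
    ring
  have := key.iteratedDeriv_eq (m + 1)
  rw [hlhs, hrhs] at this
  linear_combination this

end IteratedDerivAtZero

theorem sin_eq_mul_dslope (w : ℂ) : Complex.sin w = w * dslope Complex.sin 0 w := by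
  simpa using (sub_smul_dslope Complex.sin 0 w).symm

theorem analyticAt_dslope_sin (w : ℂ) : AnalyticAt ℂ (dslope Complex.sin 0) w :=
  ((differentiableOn_dslope univ_mem).mpr differentiable_sin.differentiableOn).analyticAt
    univ_mem

theorem dslope_sin_zero : dslope Complex.sin 0 0 = 1 := by
  simp [dslope_same]

theorem hasDerivAt_id_mul_cexp {g : ℂ → ℂ} {g' z : ℂ} (hg : HasDerivAt g g' z) :
    HasDerivAt (fun w => w * exp (g w)) ((1 + z * g') * exp (g z)) z :=
  ((hasDerivAt_id' z).mul hg.cexp).congr_deriv (by ring)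

/-- Sharpness for `𝒮*_sin`: the function `H(z) = z · exp(∫₀ᶻ sin(t⁴)/t dt)` is analytic on
`𝔻`, belongs to `𝒜` (`H(0) = 0`, `H'(0) = 1`), satisfies `z H'(z)/H(z) = 1 + sin(z⁴)`
on `𝔻` (hence `H ∈ 𝒮*_sin`), and its fifth Taylor coefficient equals `1/4`,
i.e. `H⁽⁵⁾(0)/5! = 1/4`, i.e. `H⁽⁵⁾(0) = 30`. The primitive is encoded as any analytic `g`
on `𝔻` with `g(0) = 0` and `z g'(z) = sin(z⁴)`. -/
theorem extremal_sin
    (g : ℂ → ℂ) (hg : AnalyticOnNhd ℂ g (ball (0 : ℂ) 1)) (hg0 : g 0 = 0)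
    (hg' : ∀ z ∈ ball (0 : ℂ) 1, z * deriv g z = Complex.sin (z ^ 4))
    (H : ℂ → ℂ) (hH : H = fun z => z * Complex.exp (g z)) :
    AnalyticOnNhd ℂ H (ball (0 : ℂ) 1) ∧ H 0 = 0 ∧ deriv H 0 = 1 ∧
      (∀ z ∈ ball (0 : ℂ) 1, z * deriv H z = (1 + Complex.sin (z ^ 4)) * H z) ∧
      iteratedDeriv 5 H 0 = 30 := by
  subst hH
  have h0 : (0 : ℂ) ∈ ball (0 : ℂ) 1 := mem_ball_self one_pos
  have hanalytic : AnalyticOnNhd ℂ (fun z => z * exp (g z)) (ball 0 1) :=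
    analyticOnNhd_id.mul hg.cexp
  have hderiv (z : ℂ) (hz : z ∈ ball (0 : ℂ) 1) :
      HasDerivAt (fun z => z * exp (g z)) ((1 + z * deriv g z) * exp (g z)) z :=
    hasDerivAt_id_mul_cexp (hg z hz).differentiableAt.hasDerivAt
  have hderiv0 : deriv (fun z => z * exp (g z)) 0 = 1 := by
    simp [(hderiv 0 h0).deriv, hg0]
  have hode : ∀ z ∈ ball (0 : ℂ) 1,
      z * deriv (fun z => z * exp (g z)) z = (1 + sin (z ^ 4)) * (z * exp (g z)) := by
    intro z hz
    rw [(hderiv z hz).deriv, ← hg' z hz]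
    ring
  refine ⟨hanalytic, by simp, hderiv0, hode, ?_⟩
  have hcoeff := iteratedDeriv_succ_zero_of_id_mul_deriv_eq (m := 4)
    (q := fun z => dslope sin 0 (z ^ 4)) (hanalytic 0 h0).contDiffAt
    ((analyticAt_dslope_sin _).comp (by fun_prop)).contDiffAt (by simp) hderiv0
    (by
      filter_upwards [isOpen_ball.mem_nhds h0] with z hz
      rw [hode z hz, sin_eq_mul_dslope])
  norm_num [dslope_sin_zero, Nat.factorial] at hcoeff
  linear_combination hcoeff / 4
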